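/- Let f be a fully closed ring-like continuous map from a compact Hausdorff space X onto a non-degenerate continuum Y. Then every Gδ partition in X (a closed Gδ-set disconnecting X) contains some fiber f⁻¹(y). -/

import Mathlib

/-!
Suppose no fibre of `f` lies in `L` and split `Lᶜ = U ∪ V` into disjoint nonempty open sets.
The sets `A`, `B` of points whose fibres lie in `U`, resp. `V`, are disjoint and open, and
ring-likeness gives every point of `Y` arbitrarily small neighbourhoods with frontier in `A` or
in `B`. Hence `closure A ∪ closure B = Y`, and `S = closure A ∩ closure B` is nonempty by
connectedness. The fibre over a point of `S` meets `W` and `Wᶜ` for `W = U` or `W = V`; as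
`frontier W ⊆ L` and `L` is a `Gδ` disjoint from `W`, full closedness makes `S` a countable
union of finite sets, so the compact set `S` has an isolated point `s`. Two nested small
neighbourhoods of `s` with frontier in `A` (say) then cut a nonempty proper clopen set out of
`closure B`, contradicting connectedness.
-/

open Set Topology

variable {X Y : Type*} [TopologicalSpace X] [TopologicalSpace Y]

/-- A map is fully closed if images of disjoint closed sets meet in a discrete subspace. -/
def IsFullyClosedMap (f : X → Y) : Prop :=
  ∀ F G : Set X, IsClosed F → IsClosed G → Disjoint F G →
    DiscreteTopology ↥(f '' F ∩ f '' G)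

/-- A map is ring-like if every neighborhood pair admits a smaller neighborhood of the image
point whose frontier has preimage inside the given neighborhood of the point. -/
def IsRingLike (f : X → Y) : Prop :=
  ∀ x : X, ∀ U : Set X, ∀ V : Set Y, IsOpen U → x ∈ U → IsOpen V → f x ∈ V →
    ∃ V' : Set Y, IsOpen V' ∧ f x ∈ V' ∧ V' ⊆ V ∧ f ⁻¹' (frontier V') ⊆ U

/-- A subcontinuum: a compact connected subset. -/
def IsSubcontinuum (A : Set X) : Prop := IsCompact A ∧ IsConnected A

/-- A terminal subcontinuum. -/
def IsTerminalSubcontinuum (A : Set X) : Prop :=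
  IsSubcontinuum A ∧ ∀ B : Set X, IsSubcontinuum B → A ∩ B = ∅ ∨ A ⊆ B ∨ B ⊆ A

/-- An atomic map: point-inverses (of points in the range) are terminal subcontinua. -/
def IsAtomicMap (f : X → Y) : Prop :=
  ∀ y ∈ Set.range f, IsTerminalSubcontinuum (f ⁻¹' {y})

/-- `L` is a partition in `X` between `A` and `B`. -/
def IsPartitionBetween (L A B : Set X) : Prop :=
  IsClosed L ∧ ∃ U V : Set X, IsOpen U ∧ IsOpen V ∧ Disjoint U V ∧
    Lᶜ = U ∪ V ∧ A ⊆ U ∧ B ⊆ V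

/-- Covering dimension at most `n`. -/
def CovDimLE (X : Type*) [TopologicalSpace X] (n : ℕ) : Prop :=
  ∀ (k : ℕ) (U : Fin k → Set X), (∀ i, IsOpen (U i)) → (⋃ i, U i) = Set.univ →
    ∃ (m : ℕ) (V : Fin m → Set X), (∀ j, IsOpen (V j)) ∧ (⋃ j, V j) = Set.univ ∧
      (∀ j, ∃ i, V j ⊆ U i) ∧ ∀ x : X, Set.ncard {j | x ∈ V j} ≤ n + 1

/-- `IndLE n X` means the small inductive dimension of `X` is at most `n - 1`;
in particular `IndLE 0 X` means `X` is empty. -/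
def IndLE : ℕ → (X : Type u) → [TopologicalSpace X] → Prop
  | 0, X, _ => IsEmpty X
  | n+1, X, _ => ∀ (x : X) (V : Set X), IsOpen V → x ∈ V →
      ∃ U : Set X, IsOpen U ∧ x ∈ U ∧ U ⊆ V ∧ IndLE n ↥(frontier U)

section SmallFrontier

variable {Z : Type*} [TopologicalSpace Z]

def HasSmallFrontierIn (A : Set Z) (y : Z) : Prop :=
  ∀ W : Set Z, IsOpen W → y ∈ W → ∃ V : Set Z, IsOpen V ∧ y ∈ V ∧ V ⊆ W ∧ frontier V ⊆ A

theorem HasSmallFrontierIn.mem_closure [T1Space Z] [ConnectedSpace Z] [Nontrivial Z]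
    {A : Set Z} {y : Z} (h : HasSmallFrontierIn A y) (hA : IsOpen A) : y ∈ closure A := by
  by_contra hy
  obtain ⟨z, hzy⟩ := exists_ne y
  obtain ⟨V, hV, hyV, hVsub, hVfr⟩ :=
    h _ (isClosed_closure.isOpen_compl.inter isOpen_compl_singleton) ⟨hy, hzy.symm⟩
  have hVA : Disjoint (closure V) A :=
    (subset_compl_iff_disjoint_right.mp (hVsub.trans inter_subset_left)
      |>.mono_right subset_closure).closure_left hA
  have hVclopen : IsClopen V := isClopen_iff_frontier_eq_empty.mpr <|
    subset_empty_iff.mp fun x hx => hVA.le_bot ⟨frontier_subset_closure hx, hVfr hx⟩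
  exact (hVsub (hVclopen.eq_univ ⟨y, hyV⟩ ▸ mem_univ z)).2 rfl

theorem not_hasSmallFrontierIn_of_isolated [T1Space Z] [ConnectedSpace Z] {A B : Set Z}
    (hA : IsOpen A) (hB : IsOpen B) (hAB : Disjoint A B) (hcov : closure A ∪ closure B = univ)
    (hAne : A.Nonempty) {s : Z} (hs : s ∈ closure A ∩ closure B) {W : Set Z} (hW : W ∈ 𝓝 s)
    (hiso : closure A ∩ closure B ∩ W ⊆ {s}) : ¬ HasSmallFrontierIn A s := by
  intro h
  have hBA : Disjoint (closure B) A := hAB.symm.closure_left hA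
  have hAB' : closure A ⊆ Bᶜ := fun x hxA hxB => (hAB.closure_left hB).le_bot ⟨hxA, hxB⟩
  obtain ⟨V₁, hV₁, hsV₁, hV₁W, hV₁fr⟩ := h _ isOpen_interior (mem_interior_iff_mem_nhds.mpr hW)
  obtain ⟨q, hqV₁, hqB⟩ := mem_closure_iff.mp hs.2 V₁ hV₁ hsV₁
  obtain ⟨V₂, hV₂, hsV₂, hV₂sub, hV₂fr⟩ := h (V₁ ∩ {q}ᶜ) (hV₁.inter isOpen_compl_singleton)
    ⟨hsV₁, fun hsq => hAB' hs.1 (hsq ▸ hqB)⟩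
  -- `O` is clopen: a limit point of `O` lies in `closure B`, hence off the frontiers of `V₁`
  -- and `V₂`, so in `V₁ \ V₂ ⊆ W \ {s}`, where `closure A` does not reach.
  set O := V₁ ∩ (closure V₂)ᶜ ∩ (closure A)ᶜ
  have hO : IsOpen O :=
    (hV₁.inter isClosed_closure.isOpen_compl).inter isClosed_closure.isOpen_compl
  have hOclosed : closure O ⊆ O := by
    intro x hx
    have hxB : x ∈ closure B := closure_minimal
      (fun o ho => (hcov ▸ mem_univ o : o ∈ closure A ∪ closure B).resolve_left ho.2)
      isClosed_closure hx
    have hxA : x ∉ A := fun hxA => hBA.le_bot ⟨hxB, hxA⟩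
    have hxV₁ : x ∈ V₁ := (closure_eq_self_union_frontier V₁ ▸
      closure_mono (fun o ho => ho.1.1) hx : x ∈ V₁ ∪ frontier V₁).resolve_right
      (fun hfr => hxA (hV₁fr hfr))
    have hxV₂ : x ∉ V₂ := closure_minimal (fun o ho => fun ho₂ => ho.1.2 (subset_closure ho₂))
      hV₂.isClosed_compl hx
    refine ⟨⟨hxV₁, fun hxV₂' => hxA (hV₂fr (hV₂.frontier_eq ▸ ⟨hxV₂', hxV₂⟩))⟩, fun hxA' => ?_⟩
    exact hxV₂ (hiso ⟨⟨hxA', hxB⟩, interior_subset (hV₁W hxV₁)⟩ ▸ hsV₂)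
  have hqA : q ∉ A := fun hqA => hBA.le_bot ⟨subset_closure hqB, hqA⟩
  have hqO : q ∈ O := ⟨⟨hqV₁, fun hqV₂ => hqA (hV₂fr
    (hV₂.frontier_eq ▸ ⟨hqV₂, fun hq => (hV₂sub hq).2 rfl⟩))⟩, fun hq => hAB' hq hqB⟩
  obtain ⟨a, ha⟩ := hAne
  have hOclopen : IsClopen O := ⟨isClosed_of_closure_subset hOclosed, hO⟩
  exact (hOclopen.eq_univ ⟨q, hqO⟩ ▸ mem_univ a : a ∈ O).2 (subset_closure ha)

theorem IsCompact.exists_isolated_of_countable [T2Space Z] {S : Set Z} (hS : IsCompact S)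
    (hSc : S.Countable) (hne : S.Nonempty) : ∃ s ∈ S, ∃ W ∈ 𝓝 s, S ∩ W ⊆ {s} := by
  have : CompactSpace S := isCompact_iff_compactSpace.mp hS
  have : Countable S := hSc.to_subtype
  have : Nonempty S := hne.to_subtype
  obtain ⟨s, t, ht⟩ := nonempty_interior_of_iUnion_of_closed (fun s : S => isClosed_singleton)
    (iUnion_of_singleton S)
  rw [mem_singleton_iff.mp (interior_subset ht)] at ht
  obtain ⟨W, hW, hWs⟩ := (mem_nhds_subtype _ _ _).mp (mem_interior_iff_mem_nhds.mp ht)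
  exact ⟨s, s.2, W, hW, fun x hx => congrArg Subtype.val (@hWs ⟨x, hx.1⟩ hx.2)⟩

theorem not_countable_compl_union_of_hasSmallFrontierIn [CompactSpace Z] [T2Space Z]
    [ConnectedSpace Z] [Nontrivial Z] {A B : Set Z} (hA : IsOpen A) (hB : IsOpen B)
    (hAB : Disjoint A B) (hAne : A.Nonempty) (hBne : B.Nonempty)
    (hsmall : ∀ y, HasSmallFrontierIn A y ∨ HasSmallFrontierIn B y) :
    ¬ (A ∪ B)ᶜ.Countable := by
  intro hcount
  have hcov : closure A ∪ closure B = univ :=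
    eq_univ_of_forall fun y => (hsmall y).imp (·.mem_closure hA) (·.mem_closure hB)
  have hne : (closure A ∩ closure B).Nonempty := by
    obtain ⟨a, ha⟩ := hAne
    obtain ⟨b, hb⟩ := hBne
    simpa using isPreconnected_closed_iff.mp isPreconnected_univ _ _ isClosed_closure
      isClosed_closure hcov.ge ⟨a, trivial, subset_closure ha⟩ ⟨b, trivial, subset_closure hb⟩
  have hcount' : (closure A ∩ closure B).Countable := hcount.mono fun y hy hyAB =>
    (mem_union y A B).mp hyAB |>.elim (disjoint_left.mp (hAB.symm.closure_left hA) hy.2)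
      (disjoint_left.mp (hAB.closure_left hB) hy.1)
  obtain ⟨s, hs, W, hW, hiso⟩ :=
    (isClosed_closure.inter isClosed_closure).isCompact.exists_isolated_of_countable hcount' hne
  rcases hsmall s with h | h
  · exact not_hasSmallFrontierIn_of_isolated hA hB hAB hcov hAne hs hW hiso h
  · exact not_hasSmallFrontierIn_of_isolated hB hA hAB.symm (by rwa [union_comm]) hBne
      ⟨hs.2, hs.1⟩ hW (by rwa [inter_comm (closure B)]) h

end SmallFrontier

theorem IsOpen.exists_open_partition_of_not_isPreconnected {s : Set X} (hs : IsOpen s)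
    (h : ¬ IsPreconnected s) : ∃ u v : Set X, IsOpen u ∧ IsOpen v ∧ Disjoint u v ∧
      u.Nonempty ∧ v.Nonempty ∧ s = u ∪ v := by
  simp only [IsPreconnected, not_forall, exists_prop] at h
  obtain ⟨u, v, hu, hv, hsuv, hsu, hsv, hsuv'⟩ := h
  refine ⟨s ∩ u, s ∩ v, hs.inter hu, hs.inter hv, ?_, hsu, hsv, ?_⟩
  · exact disjoint_left.mpr fun x hxu hxv => hsuv' ⟨x, hxu.1, hxu.2, hxv.2⟩
  · rw [← inter_union_distrib_left, inter_eq_left.mpr hsuv]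

theorem frontier_subset_of_compl_eq_union {L U V : Set X} (hU : IsOpen U) (hV : IsOpen V)
    (hUV : Disjoint U V) (hL : Lᶜ = U ∪ V) : frontier U ⊆ L := by
  intro x hx
  by_contra hxL
  rcases (hL ▸ hxL : x ∈ U ∪ V) with hxU | hxV
  · exact hx.2 (hU.interior_eq.symm ▸ hxU)
  · exact disjoint_left.mp (hUV.closure_left hV) hx.1 hxV

theorem IsRingLike.hasSmallFrontierIn_kernImage {f : X → Y} (hr : IsRingLike f) {U : Set X}
    (hU : IsOpen U) {x : X} (hx : x ∈ U) : HasSmallFrontierIn (kernImage f U) (f x) := by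
  intro W hW hxW
  obtain ⟨V, hV, hxV, hVW, hfr⟩ := hr x U W hU hx hW hxW
  exact ⟨V, hV, hxV, hVW, fun y hy x' hx' => hfr (by rwa [mem_preimage, hx'])⟩

theorem IsFullyClosedMap.finite_image_inter_image [CompactSpace X] [T2Space Y] {f : X → Y}
    (hfc : IsFullyClosedMap f) (hf : Continuous f) {F G : Set X} (hF : IsClosed F)
    (hG : IsClosed G) (hFG : Disjoint F G) : (f '' F ∩ f '' G).Finite :=
  ((hF.isCompact.image hf).inter_right (hG.isCompact.image hf).isClosed).finite
    ⟨hfc F G hF hG hFG⟩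

theorem IsFullyClosedMap.countable_image_compl_inter_image [CompactSpace X] [T2Space Y]
    {f : X → Y} (hfc : IsFullyClosedMap f) (hf : Continuous f) {U L : Set X} (hU : IsOpen U)
    (hL : IsGδ L) (hUL : Disjoint U L) (hfr : frontier U ⊆ L) :
    (f '' Uᶜ ∩ f '' U).Countable := by
  obtain ⟨T, hTo, hTc, rfl⟩ := hL
  have hcover : f '' Uᶜ ∩ f '' U ⊆ ⋃ t ∈ T, f '' Uᶜ ∩ f '' (closure U \ t) := by
    rintro y ⟨hy, x, hxU, rfl⟩
    obtain ⟨t, ht, hxt⟩ : ∃ t ∈ T, x ∉ t := by simpa using disjoint_left.mp hUL hxU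
    exact mem_biUnion ht ⟨hy, x, ⟨subset_closure hxU, hxt⟩, rfl⟩
  refine (hTc.biUnion fun t ht => (hfc.finite_image_inter_image hf hU.isClosed_compl
    (isClosed_closure.sdiff (hTo t ht)) ?_).countable).mono hcover
  exact disjoint_left.mpr fun x hxU hx =>
    hx.2 (hfr (hU.frontier_eq ▸ ⟨hx.1, hxU⟩) t ht)

theorem IsFullyClosedMap.countable_image_compl_inter_image_compl [CompactSpace X] [T2Space Y]
    {f : X → Y} (hfc : IsFullyClosedMap f) (hf : Continuous f) {L U V : Set X} (hL : IsGδ L)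
    (hU : IsOpen U) (hV : IsOpen V) (hUV : Disjoint U V) (hLUV : Lᶜ = U ∪ V)
    (hoff : ∀ y, ∃ x, f x = y ∧ x ∉ L) : (f '' Uᶜ ∩ f '' Vᶜ).Countable := by
  have hUL : Disjoint U L := disjoint_compl_left.mono_left (hLUV ▸ subset_union_left)
  have hVL : Disjoint V L := disjoint_compl_left.mono_left (hLUV ▸ subset_union_right)
  have hfrU := frontier_subset_of_compl_eq_union hU hV hUV hLUV
  have hfrV := frontier_subset_of_compl_eq_union hV hU hUV.symm (hLUV.trans (union_comm U V))
  refine ((hfc.countable_image_compl_inter_image hf hU hL hUL hfrU).union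
    (hfc.countable_image_compl_inter_image hf hV hL hVL hfrV)).mono ?_
  rintro y ⟨hyU, hyV⟩
  obtain ⟨x, rfl, hxL⟩ := hoff y
  rcases (hLUV ▸ hxL : x ∈ U ∪ V) with hxU | hxV
  exacts [.inl ⟨hyU, mem_image_of_mem f hxU⟩, .inr ⟨hyV, mem_image_of_mem f hxV⟩]

theorem statement13_general {X Y : Type*} [TopologicalSpace X] [TopologicalSpace Y]
    [CompactSpace X]
    [CompactSpace Y] [T2Space Y] [ConnectedSpace Y] [Nontrivial Y]
    (f : X → Y) (hf : Continuous f)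
    (hfc : IsFullyClosedMap f) (hr : IsRingLike f) :
    ∀ L : Set X, IsClosed L → IsGδ L → ¬ IsPreconnected (Lᶜ : Set X) →
      ∃ y : Y, f ⁻¹' {y} ⊆ L := by
  intro L hLc hLGδ hLsep
  by_contra! hfib
  have hoff : ∀ y, ∃ x, f x = y ∧ x ∉ L := fun y => by simpa [not_subset] using hfib y
  obtain ⟨U, V, hU, hV, hUV, hUne, hVne, hLUV⟩ :=
    hLc.isOpen_compl.exists_open_partition_of_not_isPreconnected hLsep
  have hA : IsOpen (kernImage f U) := isClosedMap_iff_kernImage.mp hf.isClosedMap hU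
  have hB : IsOpen (kernImage f V) := isClosedMap_iff_kernImage.mp hf.isClosedMap hV
  have hAB : Disjoint (kernImage f U) (kernImage f V) := disjoint_left.mpr fun y hyU hyV => by
    obtain ⟨x, rfl, -⟩ := hoff y
    exact disjoint_left.mp hUV (hyU rfl) (hyV rfl)
  have hAne : (kernImage f U).Nonempty := closure_nonempty_iff.mp <| hUne.elim fun x hx =>
    ⟨_, (hr.hasSmallFrontierIn_kernImage hU hx).mem_closure hA⟩
  have hBne : (kernImage f V).Nonempty := closure_nonempty_iff.mp <| hVne.elim fun x hx =>
    ⟨_, (hr.hasSmallFrontierIn_kernImage hV hx).mem_closure hB⟩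
  refine not_countable_compl_union_of_hasSmallFrontierIn hA hB hAB hAne hBne (fun y => ?_) ?_
  · obtain ⟨x, rfl, hxL⟩ := hoff y
    rcases (hLUV ▸ hxL : x ∈ U ∪ V) with hxU | hxV
    exacts [.inl (hr.hasSmallFrontierIn_kernImage hU hxU),
      .inr (hr.hasSmallFrontierIn_kernImage hV hxV)]
  · simpa [kernImage_eq_compl] using
      hfc.countable_image_compl_inter_image_compl hf hLGδ hU hV hUV hLUV hoff

theorem statement13 {X Y : Type*} [TopologicalSpace X] [TopologicalSpace Y]
    [CompactSpace X] [T2Space X]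
    [CompactSpace Y] [T2Space Y] [ConnectedSpace Y] [Nontrivial Y]
    (f : X → Y) (hf : Continuous f) (hsurj : Function.Surjective f)
    (hfc : IsFullyClosedMap f) (hr : IsRingLike f) :
    ∀ L : Set X, IsClosed L → IsGδ L → ¬ IsPreconnected (Lᶜ : Set X) →
      ∃ y : Y, f ⁻¹' {y} ⊆ L :=
  statement13_general f hf hfc hr
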